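/- arXiv:1905.08724 — 5 statements merged into one kernel-verified Lean document; each statement's English description precedes it below -/
import Mathlib

section
/- R satisfies the quantum (non-dynamical) Yang–Baxter equation: for all ℏ, z₁, z₂, z₃ ∈ ℂ, R^ℏ_{12}(z₁−z₂) R^ℏ_{13}(z₁−z₃) R^ℏ_{23}(z₂−z₃) = R^ℏ_{23}(z₂−z₃) R^ℏ_{13}(z₁−z₃) R^ℏ_{12}(z₁−z₂) in Mat_N(ℂ)^{⊗3}. -/
open Matrix Kronecker BigOperators

/-- The permutation operator `P₁₂ = Σ_{i,j} e_{ij} ⊗ e_{ji}` on `ℂ^N ⊗ ℂ^N`. -/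
def Perm (N : ℕ) : Matrix (Fin N × Fin N) (Fin N × Fin N) ℂ :=
  Matrix.of fun p q => if p.1 = q.2 ∧ p.2 = q.1 then 1 else 0

/-- Embedding `X ↦ X₁₂` of `Mat_N ⊗ Mat_N` into the tensor factors 1,2 of `Mat_N^{⊗3}`. -/
def e12 {N : ℕ} (X : Matrix (Fin N × Fin N) (Fin N × Fin N) ℂ) :
    Matrix (Fin N × Fin N × Fin N) (Fin N × Fin N × Fin N) ℂ :=
  Matrix.of fun p q =>
    X (p.1, p.2.1) (q.1, q.2.1) * (if p.2.2 = q.2.2 then (1 : ℂ) else 0)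

/-- Embedding `X ↦ X₁₃` of `Mat_N ⊗ Mat_N` into the tensor factors 1,3 of `Mat_N^{⊗3}`. -/
def e13 {N : ℕ} (X : Matrix (Fin N × Fin N) (Fin N × Fin N) ℂ) :
    Matrix (Fin N × Fin N × Fin N) (Fin N × Fin N × Fin N) ℂ :=
  Matrix.of fun p q =>
    X (p.1, p.2.2) (q.1, q.2.2) * (if p.2.1 = q.2.1 then (1 : ℂ) else 0)

/-- Embedding `X ↦ X₂₃` of `Mat_N ⊗ Mat_N` into the tensor factors 2,3 of `Mat_N^{⊗3}`. -/
def e23 {N : ℕ} (X : Matrix (Fin N × Fin N) (Fin N × Fin N) ℂ) :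
    Matrix (Fin N × Fin N × Fin N) (Fin N × Fin N × Fin N) ℂ :=
  Matrix.of fun p q =>
    X (p.2.1, p.2.2) (q.2.1, q.2.2) * (if p.1 = q.1 then (1 : ℂ) else 0)

section Aux

variable {N : ℕ}

lemma e12_mul (X Y : Matrix (Fin N × Fin N) (Fin N × Fin N) ℂ) :
    e12 X * e12 Y = e12 (X * Y) := by
  ext ⟨a, b, c⟩ ⟨d, e, f⟩
  simp [e12, mul_apply, Fintype.sum_prod_type, mul_ite, ite_mul, mul_zero, zero_mul,
    Finset.sum_ite_eq, Finset.sum_ite_eq', mul_comm, mul_assoc, mul_left_comm,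
    Finset.mul_sum, Finset.sum_mul]

lemma e13_mul (X Y : Matrix (Fin N × Fin N) (Fin N × Fin N) ℂ) :
    e13 X * e13 Y = e13 (X * Y) := by
  ext ⟨a, b, c⟩ ⟨d, e, f⟩
  simp [e13, mul_apply, Fintype.sum_prod_type, mul_ite, ite_mul, mul_zero, zero_mul,
    Finset.sum_ite_eq, Finset.sum_ite_eq', mul_comm, mul_assoc, mul_left_comm,
    Finset.mul_sum, Finset.sum_mul]

lemma e23_mul (X Y : Matrix (Fin N × Fin N) (Fin N × Fin N) ℂ) :
    e23 X * e23 Y = e23 (X * Y) := by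
  ext ⟨a, b, c⟩ ⟨d, e, f⟩
  simp [e23, mul_apply, Fintype.sum_prod_type, mul_ite, ite_mul, mul_zero, zero_mul,
    Finset.sum_ite_eq, Finset.sum_ite_eq', mul_comm, mul_assoc, mul_left_comm,
    Finset.mul_sum, Finset.sum_mul]

lemma Q12_e13 (X : Matrix (Fin N × Fin N) (Fin N × Fin N) ℂ) :
    e12 (Perm N) * e13 X = e23 X * e12 (Perm N) := by
  ext ⟨a, b, c⟩ ⟨d, e, f⟩
  simp [e12, e13, e23, Perm, mul_apply, Fintype.sum_prod_type, mul_ite, ite_mul, mul_zero,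
    zero_mul, Finset.sum_ite_eq, Finset.sum_ite_eq', ite_and, and_comm, eq_comm]

lemma Q12_e23 (X : Matrix (Fin N × Fin N) (Fin N × Fin N) ℂ) :
    e12 (Perm N) * e23 X = e13 X * e12 (Perm N) := by
  ext ⟨a, b, c⟩ ⟨d, e, f⟩
  simp [e12, e13, e23, Perm, mul_apply, Fintype.sum_prod_type, mul_ite, ite_mul, mul_zero,
    zero_mul, Finset.sum_ite_eq, Finset.sum_ite_eq', ite_and, and_comm, eq_comm]

lemma Q23_e12 (X : Matrix (Fin N × Fin N) (Fin N × Fin N) ℂ) :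
    e23 (Perm N) * e12 X = e13 X * e23 (Perm N) := by
  ext ⟨a, b, c⟩ ⟨d, e, f⟩
  simp [e12, e13, e23, Perm, mul_apply, Fintype.sum_prod_type, mul_ite, ite_mul, mul_zero,
    zero_mul, Finset.sum_ite_eq, Finset.sum_ite_eq', ite_and, and_comm, eq_comm]

lemma Q23_e13 (X : Matrix (Fin N × Fin N) (Fin N × Fin N) ℂ) :
    e23 (Perm N) * e13 X = e12 X * e23 (Perm N) := by
  ext ⟨a, b, c⟩ ⟨d, e, f⟩
  simp [e12, e13, e23, Perm, mul_apply, Fintype.sum_prod_type, mul_ite, ite_mul, mul_zero,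
    zero_mul, Finset.sum_ite_eq, Finset.sum_ite_eq', ite_and, and_comm, eq_comm]

lemma Perm_sq : Perm N * Perm N = 1 := by
  ext ⟨a, b⟩ ⟨c, d⟩
  simp [Perm, mul_apply, Fintype.sum_prod_type, ite_and, one_apply, Finset.sum_ite_eq,
    Finset.sum_ite_eq', eq_comm, and_comm, Prod.ext_iff]

lemma e12_one : e12 (1 : Matrix (Fin N × Fin N) (Fin N × Fin N) ℂ) = 1 := by
  ext ⟨a, b, c⟩ ⟨d, e, f⟩
  simp [e12, one_apply, Prod.ext_iff, ite_and, mul_ite, mul_one, mul_zero]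
  all_goals aesop

lemma e13_one : e13 (1 : Matrix (Fin N × Fin N) (Fin N × Fin N) ℂ) = 1 := by
  ext ⟨a, b, c⟩ ⟨d, e, f⟩
  simp [e13, one_apply, Prod.ext_iff, ite_and, mul_ite, mul_one, mul_zero]
  all_goals aesop

lemma e23_one : e23 (1 : Matrix (Fin N × Fin N) (Fin N × Fin N) ℂ) = 1 := by
  ext ⟨a, b, c⟩ ⟨d, e, f⟩
  simp [e23, one_apply, Prod.ext_iff, ite_and, mul_ite, mul_one, mul_zero]
  all_goals aesop

lemma e12_neg (X : Matrix (Fin N × Fin N) (Fin N × Fin N) ℂ) : e12 (-X) = -e12 X := by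
  ext ⟨a, b, c⟩ ⟨d, e, f⟩; simp [e12]; split <;> simp
lemma e13_neg (X : Matrix (Fin N × Fin N) (Fin N × Fin N) ℂ) : e13 (-X) = -e13 X := by
  ext ⟨a, b, c⟩ ⟨d, e, f⟩; simp [e13]; split <;> simp
lemma e23_neg (X : Matrix (Fin N × Fin N) (Fin N × Fin N) ℂ) : e23 (-X) = -e23 X := by
  ext ⟨a, b, c⟩ ⟨d, e, f⟩; simp [e23]; split <;> simp

lemma e13_smul (c : ℂ) (X : Matrix (Fin N × Fin N) (Fin N × Fin N) ℂ) :
    e13 (c • X) = c • e13 X := by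
  ext ⟨a, b, cc⟩ ⟨d, e, f⟩; simp [e13, mul_assoc]
lemma e23_smul (c : ℂ) (X : Matrix (Fin N × Fin N) (Fin N × Fin N) ℂ) :
    e23 (c • X) = c • e23 X := by
  ext ⟨a, b, cc⟩ ⟨d, e, f⟩; simp [e23, mul_assoc]

lemma Q12_sq : e12 (Perm N) * e12 (Perm N) = 1 := by rw [e12_mul, Perm_sq, e12_one]
lemma Q23_sq : e23 (Perm N) * e23 (Perm N) = 1 := by rw [e23_mul, Perm_sq, e23_one]

lemma sand12_12 (X : Matrix (Fin N × Fin N) (Fin N × Fin N) ℂ) :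
    e12 (Perm N) * e12 X * e12 (Perm N) = e12 (Perm N * X * Perm N) := by
  rw [e12_mul, e12_mul]
lemma sand12_13 (X : Matrix (Fin N × Fin N) (Fin N × Fin N) ℂ) :
    e12 (Perm N) * e13 X * e12 (Perm N) = e23 X := by
  rw [Q12_e13, mul_assoc, Q12_sq, mul_one]
lemma sand12_23 (X : Matrix (Fin N × Fin N) (Fin N × Fin N) ℂ) :
    e12 (Perm N) * e23 X * e12 (Perm N) = e13 X := by
  rw [Q12_e23, mul_assoc, Q12_sq, mul_one]
lemma sand23_12 (X : Matrix (Fin N × Fin N) (Fin N × Fin N) ℂ) :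
    e23 (Perm N) * e12 X * e23 (Perm N) = e13 X := by
  rw [Q23_e12, mul_assoc, Q23_sq, mul_one]
lemma sand23_13 (X : Matrix (Fin N × Fin N) (Fin N × Fin N) ℂ) :
    e23 (Perm N) * e13 X * e23 (Perm N) = e12 X := by
  rw [Q23_e13, mul_assoc, Q23_sq, mul_one]
lemma sand23_23 (X : Matrix (Fin N × Fin N) (Fin N × Fin N) ℂ) :
    e23 (Perm N) * e23 X * e23 (Perm N) = e23 (Perm N * X * Perm N) := by
  rw [e23_mul, e23_mul]

lemma conj_eq_add {α : Type*} [Ring α] {Q : α} (hQ : Q * Q = 1) {A B C D F G : α}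
    (h : A * B = C * D + F * G) :
    (Q*A*Q) * (Q*B*Q) = (Q*C*Q)*(Q*D*Q) + (Q*F*Q)*(Q*G*Q) := by
  have e : ∀ X Y : α, (Q*X*Q)*(Q*Y*Q) = Q*(X*(Q*Q)*Y)*Q := by intros; noncomm_ring
  rw [e, e, e, hQ]
  simp only [mul_one]
  rw [← add_mul, ← mul_add, h]

lemma conj_eq_sub {α : Type*} [Ring α] {Q : α} (hQ : Q * Q = 1) {A B C D F G : α}
    (h : A * B = C * D - F * G) :
    (Q*A*Q) * (Q*B*Q) = (Q*C*Q)*(Q*D*Q) - (Q*F*Q)*(Q*G*Q) := by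
  have e : ∀ X Y : α, (Q*X*Q)*(Q*Y*Q) = Q*(X*(Q*Q)*Y)*Q := by intros; noncomm_ring
  rw [e, e, e, hQ]
  simp only [mul_one]
  rw [← sub_mul, ← mul_sub, h]

end Aux

/-- A unitary skew-symmetric solution of the associative Yang–Baxter equation satisfies the
quantum (non-dynamical) Yang–Baxter equation. -/
theorem quantum_yang_baxter_of_AYBE (N : ℕ) (hN : 1 ≤ N)
    (R : ℂ → ℂ → Matrix (Fin N × Fin N) (Fin N × Fin N) ℂ) (E : ℂ → ℂ)
    (hAYBE : ∀ ℏ η z₁ z₂ z₃ : ℂ,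
      e12 (R ℏ (z₁ - z₂)) * e23 (R η (z₂ - z₃)) =
        e13 (R η (z₁ - z₃)) * e12 (R (ℏ - η) (z₁ - z₂)) +
          e23 (R (η - ℏ) (z₂ - z₃)) * e13 (R ℏ (z₁ - z₃)))
    (hskew : ∀ ℏ z : ℂ, R ℏ z = -(Perm N * R (-ℏ) (-z) * Perm N))
    (hunit : ∀ ℏ z : ℂ, R ℏ z * (Perm N * R ℏ (-z) * Perm N) =
      (E ℏ - E z) • (1 : Matrix (Fin N × Fin N) (Fin N × Fin N) ℂ))
    (ℏ z₁ z₂ z₃ : ℂ) :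
    e12 (R ℏ (z₁ - z₂)) * e13 (R ℏ (z₁ - z₃)) * e23 (R ℏ (z₂ - z₃)) =
      e23 (R ℏ (z₂ - z₃)) * e13 (R ℏ (z₁ - z₃)) * e12 (R ℏ (z₁ - z₂)) := by
  -- conjugation of `R` by `Perm`
  have hP : ∀ a x : ℂ, Perm N * R a x * Perm N = -R (-a) (-x) := by
    intro a x
    rw [hskew (-a) (-x), neg_neg, neg_neg, neg_neg]
  -- unitarity in product form
  have hU : ∀ a x : ℂ, R a x * R (-a) x = (E x - E a) • 1 := by
    intro a x
    have h1 := hunit a x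
    have h2 : Perm N * R a (-x) * Perm N = -R (-a) x := by
      have := hP a (-x); rwa [neg_neg] at this
    rw [h2, mul_neg, neg_eq_iff_eq_neg] at h1
    rw [h1, ← neg_smul]
    congr 1; ring
  -- E is even
  have hEeven : ∀ a : ℂ, E (-a) = E a := by
    intro a
    have h1 := hU a 0
    have h2 := hU (-a) 0
    rw [neg_neg] at h2
    have t := Matrix.trace_mul_comm (R a 0) (R (-a) 0)
    rw [h1, h2] at t
    simp only [Matrix.trace_smul, Matrix.trace_one, smul_eq_mul] at t
    have hcard : (Fintype.card (Fin N × Fin N) : ℂ) ≠ 0 := by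
      have hN0 : (N : ℂ) ≠ 0 := Nat.cast_ne_zero.mpr (by omega)
      simp only [Fintype.card_prod, Fintype.card_fin]
      push_cast
      exact mul_ne_zero hN0 hN0
    have h3 := mul_right_cancel₀ hcard t
    linear_combination h3
  -- the AYBE with independent spectral parameters
  have hA : ∀ a b x y : ℂ,
      e12 (R a x) * e23 (R b y) =
        e13 (R b (x + y)) * e12 (R (a - b) x) + e23 (R (b - a) y) * e13 (R a (x + y)) := by
    intro a b x y
    have := hAYBE a b (x + y) y 0
    simpa only [add_sub_cancel_right, sub_zero] using this
  have hC : ∀ a b x y : ℂ,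
      e13 (R a x) * e23 (R b y) =
        e23 (R (a + b) y) * e12 (R a (x - y)) - e12 (R (-b) (x - y)) * e13 (R (a + b) x) := by
    intro a b x y
    have h := conj_eq_add Q23_sq (hA a (-b) x (-y))
    rw [sand23_12, sand23_23, sand23_13, sand23_12, sand23_23, sand23_13] at h
    simp only [hP, e23_neg, neg_neg, mul_neg, neg_mul, ← sub_eq_add_neg, sub_neg_eq_add,
      neg_sub] at h
    rw [neg_eq_iff_eq_neg] at h
    rw [h]; abel
  have hE : ∀ a b x y : ℂ,
      e23 (R a x) * e13 (R b y) =
        e12 (R b (y - x)) * e23 (R (a + b) x) - e13 (R (a + b) y) * e12 (R (-a) (y - x)) := by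
    intro a b x y
    have h := conj_eq_sub Q12_sq (hC a b x y)
    rw [sand12_13, sand12_23, sand12_23, sand12_12, sand12_12, sand12_13] at h
    simp only [hP, e12_neg, neg_neg, mul_neg, neg_mul, neg_sub] at h
    rw [h]; abel
  have hD : ∀ a b x y : ℂ,
      e23 (R a x) * e12 (R b y) =
        e13 (R b (y + x)) * e23 (R (a - b) x) + e12 (R (b - a) y) * e13 (R a (y + x)) := by
    intro a b x y
    have h := conj_eq_sub Q23_sq (hE (-a) b (-x) y)
    rw [sand23_23, sand23_13, sand23_12, sand23_23, sand23_13, sand23_12] at h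
    simp only [hP, e23_neg, neg_neg, mul_neg, neg_mul, neg_sub, sub_neg_eq_add] at h
    rw [neg_eq_iff_eq_neg] at h
    rw [h]; abel
  have hF : ∀ a b x y : ℂ,
      e13 (R a x) * e12 (R b y) =
        e12 (R (b + a) y) * e23 (R a (x - y)) - e23 (R (-b) (x - y)) * e13 (R (a + b) x) := by
    intro a b x y
    have h := conj_eq_add Q12_sq (hD a (-b) x (-y))
    rw [sand12_23, sand12_12, sand12_13, sand12_23, sand12_12, sand12_13] at h
    simp only [hP, e12_neg, neg_neg, mul_neg, neg_mul, neg_sub, sub_neg_eq_add,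
      ← sub_eq_add_neg] at h
    rw [neg_eq_iff_eq_neg] at h
    rw [h]; abel
  have hB : ∀ a b x y : ℂ,
      e12 (R a x) * e13 (R b y) =
        e23 (R b (y - x)) * e12 (R (a + b) x) - e13 (R (b + a) y) * e23 (R (-a) (y - x)) := by
    intro a b x y
    have h := conj_eq_add Q12_sq (hA (-a) b (-x) y)
    rw [sand12_12, sand12_23, sand12_13, sand12_12, sand12_23, sand12_13] at h
    simp only [hP, e12_neg, neg_neg, mul_neg, neg_mul, neg_sub, sub_neg_eq_add,
      ← sub_eq_add_neg] at h
    rw [neg_eq_iff_eq_neg] at h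
    rw [h]; abel
  -- unitarity specializations
  have hU1 : R (-ℏ) (z₂ - z₃) * R ℏ (z₂ - z₃) = (E (z₂ - z₃) - E ℏ) • 1 := by
    have := hU (-ℏ) (z₂ - z₃); rwa [neg_neg, hEeven] at this
  have hU2 : R ℏ (z₂ - z₃) * R (-ℏ) (z₂ - z₃) = (E (z₂ - z₃) - E ℏ) • 1 := hU ℏ (z₂ - z₃)
  have Eq1 := hB ℏ ℏ (z₁ - z₂) (z₁ - z₃)
  have Eq2 := hF ℏ ℏ (z₁ - z₃) (z₁ - z₂)
  rw [show z₁ - z₃ - (z₁ - z₂) = z₂ - z₃ from by ring] at Eq1 Eq2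
  calc e12 (R ℏ (z₁ - z₂)) * e13 (R ℏ (z₁ - z₃)) * e23 (R ℏ (z₂ - z₃))
      = (e23 (R ℏ (z₂ - z₃)) * e12 (R (ℏ + ℏ) (z₁ - z₂)) -
          e13 (R (ℏ + ℏ) (z₁ - z₃)) * e23 (R (-ℏ) (z₂ - z₃))) * e23 (R ℏ (z₂ - z₃)) := by
        rw [Eq1]
    _ = e23 (R ℏ (z₂ - z₃)) * e12 (R (ℏ + ℏ) (z₁ - z₂)) * e23 (R ℏ (z₂ - z₃)) -
          (E (z₂ - z₃) - E ℏ) • e13 (R (ℏ + ℏ) (z₁ - z₃)) := by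
        rw [sub_mul, mul_assoc (e13 (R (ℏ + ℏ) (z₁ - z₃))), e23_mul, hU1, e23_smul, e23_one,
          mul_smul_comm, mul_one]
    _ = e23 (R ℏ (z₂ - z₃)) * (e12 (R (ℏ + ℏ) (z₁ - z₂)) * e23 (R ℏ (z₂ - z₃)) -
          e23 (R (-ℏ) (z₂ - z₃)) * e13 (R (ℏ + ℏ) (z₁ - z₃))) := by
        rw [mul_sub, ← mul_assoc, ← mul_assoc, e23_mul, hU2, e23_smul, e23_one,
          smul_mul_assoc, one_mul]
    _ = e23 (R ℏ (z₂ - z₃)) * (e13 (R ℏ (z₁ - z₃)) * e12 (R ℏ (z₁ - z₂))) := by rw [← Eq2]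
    _ = e23 (R ℏ (z₂ - z₃)) * e13 (R ℏ (z₁ - z₃)) * e12 (R ℏ (z₁ - z₂)) := by rw [mul_assoc]
end

section
/- R satisfies the Yang–Baxter equation with two Planck constants: for all ℏ, η, z₁, z₂, z₃ ∈ ℂ, writing R^ℏ_{ab} := R^ℏ_{ab}(z_a − z_b), one has R^η_{12} R^ℏ_{13} R^η_{23} + R^ℏ_{12} R^η_{13} R^ℏ_{23} = R^η_{23} R^ℏ_{13} R^η_{12} + R^ℏ_{23} R^η_{13} R^ℏ_{12} in Mat_N(ℂ)^{⊗3}. -/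
open Matrix Kronecker BigOperators

namespace YBaux

variable {N : ℕ}

/-- index reassociation -/
def pa (N : ℕ) : (Fin N × Fin N × Fin N) ≃ (Fin N × Fin N) × Fin N :=
  (Equiv.prodAssoc (Fin N) (Fin N) (Fin N)).symm

lemma e12_eq (X : Matrix (Fin N × Fin N) (Fin N × Fin N) ℂ) :
    e12 X = (X ⊗ₖ (1 : Matrix (Fin N) (Fin N) ℂ)).submatrix (pa N) (pa N) := by
  ext p q
  simp [e12, pa, Matrix.kroneckerMap_apply, Matrix.one_apply, Equiv.prodAssoc]

lemma emul12 (X Y : Matrix (Fin N × Fin N) (Fin N × Fin N) ℂ) :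
    e12 X * e12 Y = e12 (X * Y) := by
  rw [e12_eq, e12_eq, Matrix.submatrix_mul_equiv, ← Matrix.mul_kronecker_mul, Matrix.mul_one,
    e12_eq]

lemma e12_smul (c : ℂ) (X : Matrix (Fin N × Fin N) (Fin N × Fin N) ℂ) :
    e12 (c • X) = c • e12 X := by
  ext p q
  simp [e12, mul_assoc]

lemma e12_one : e12 (1 : Matrix (Fin N × Fin N) (Fin N × Fin N) ℂ) = 1 := by
  ext ⟨a, b, c⟩ ⟨d, e, f⟩
  simp only [e12, Matrix.of_apply, Matrix.one_apply, Prod.ext_iff]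
  split_ifs <;> simp_all

lemma e12_smul_one (c : ℂ) :
    e12 (c • (1 : Matrix (Fin N × Fin N) (Fin N × Fin N) ℂ)) = c • 1 := by
  rw [e12_smul, e12_one]

lemma e23_neg (X : Matrix (Fin N × Fin N) (Fin N × Fin N) ℂ) : e23 (-X) = -(e23 X) := by
  ext p q
  simp only [e23, Matrix.of_apply, Matrix.neg_apply, neg_mul]


lemma perm_mul (X : Matrix (Fin N × Fin N) (Fin N × Fin N) ℂ) :
    Perm N * X = X.submatrix Prod.swap id := by
  ext p q
  have h : ∀ r : Fin N × Fin N, (p.1 = r.2 ∧ p.2 = r.1) ↔ Prod.swap p = r := by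
    intro r
    simp [Prod.ext_iff, eq_comm, and_comm]
  simp [Matrix.mul_apply, Perm, h, ite_mul, Finset.sum_ite_eq]

lemma mul_perm (X : Matrix (Fin N × Fin N) (Fin N × Fin N) ℂ) :
    X * Perm N = X.submatrix id Prod.swap := by
  ext p q
  have h : ∀ r : Fin N × Fin N, (r.1 = q.2 ∧ r.2 = q.1) ↔ r = Prod.swap q := by
    intro r
    simp [Prod.ext_iff]
  simp [Matrix.mul_apply, Perm, h, mul_ite, Finset.sum_ite_eq']

lemma perm_conj_apply (X : Matrix (Fin N × Fin N) (Fin N × Fin N) ℂ)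
    (p q : Fin N × Fin N) :
    (Perm N * X * Perm N) p q = X p.swap q.swap := by
  rw [perm_mul, mul_perm]
  rfl

/-- swap of the 2nd and 3rd tensor factors -/
def sw (N : ℕ) : (Fin N × Fin N × Fin N) ≃ (Fin N × Fin N × Fin N) :=
  (Equiv.refl (Fin N)).prodCongr (Equiv.prodComm (Fin N) (Fin N))

def conj3 (M : Matrix (Fin N × Fin N × Fin N) (Fin N × Fin N × Fin N) ℂ) :
    Matrix (Fin N × Fin N × Fin N) (Fin N × Fin N × Fin N) ℂ :=
  M.submatrix (sw N) (sw N)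

lemma conj3_mul (A B : Matrix (Fin N × Fin N × Fin N) (Fin N × Fin N × Fin N) ℂ) :
    conj3 (A * B) = conj3 A * conj3 B :=
  (Matrix.submatrix_mul_equiv A B _ _ _).symm

lemma conj3_add (A B : Matrix (Fin N × Fin N × Fin N) (Fin N × Fin N × Fin N) ℂ) :
    conj3 (A + B) = conj3 A + conj3 B := rfl

lemma conj3_e12 (X : Matrix (Fin N × Fin N) (Fin N × Fin N) ℂ) :
    conj3 (e12 X) = e13 X := rfl

lemma conj3_e13 (X : Matrix (Fin N × Fin N) (Fin N × Fin N) ℂ) :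
    conj3 (e13 X) = e12 X := rfl

lemma conj3_e23 (X : Matrix (Fin N × Fin N) (Fin N × Fin N) ℂ) :
    conj3 (e23 X) = e23 (Perm N * X * Perm N) := by
  ext p q
  rw [conj3, Matrix.submatrix_apply]
  show e23 X (p.1, p.2.2, p.2.1) (q.1, q.2.2, q.2.1) = _
  simp [e23, perm_conj_apply, Prod.swap]


section withR
variable (R : ℂ → ℂ → Matrix (Fin N × Fin N) (Fin N × Fin N) ℂ) (E : ℂ → ℂ)

lemma hswap (hskew : ∀ ℏ z : ℂ, R ℏ z = -(Perm N * R (-ℏ) (-z) * Perm N)) :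
    ∀ a w : ℂ, Perm N * R a w * Perm N = -(R (-a) (-w)) := by
  intro a w
  have h := hskew (-a) (-w)
  rw [neg_neg, neg_neg] at h
  rw [h, neg_neg]

lemma hU1 (hskew : ∀ ℏ z : ℂ, R ℏ z = -(Perm N * R (-ℏ) (-z) * Perm N))
    (hunit : ∀ ℏ z : ℂ, R ℏ z * (Perm N * R ℏ (-z) * Perm N) =
      (E ℏ - E z) • (1 : Matrix (Fin N × Fin N) (Fin N × Fin N) ℂ)) :
    ∀ ℏ z : ℂ, R ℏ z * R (-ℏ) z = (E z - E ℏ) • 1 := by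
  intro ℏ z
  have h := hunit ℏ z
  have h2 := hswap R hskew ℏ (-z)
  rw [neg_neg] at h2
  rw [h2, mul_neg] at h
  have := congrArg Neg.neg h
  rwa [neg_neg, ← neg_smul, neg_sub] at this

lemma hU2 (hskew : ∀ ℏ z : ℂ, R ℏ z = -(Perm N * R (-ℏ) (-z) * Perm N))
    (hunit : ∀ ℏ z : ℂ, R ℏ z * (Perm N * R ℏ (-z) * Perm N) =
      (E ℏ - E z) • (1 : Matrix (Fin N × Fin N) (Fin N × Fin N) ℂ)) :
    ∀ ℏ z : ℂ, R (-ℏ) z * R ℏ z = (E z - E ℏ) • 1 := by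
  intro ℏ z
  have h1 : R ℏ z * R (-ℏ) z = (E z - E ℏ) • 1 := hU1 R E hskew hunit ℏ z
  have h2 : R (-ℏ) z * R ℏ z = (E z - E (-ℏ)) • 1 := by
    have := hU1 R E hskew hunit (-ℏ) z
    rwa [neg_neg] at this
  by_cases hA : R ℏ z = 0
  · rw [hA, mul_zero]
    rw [hA, zero_mul] at h1
    exact h1
  · have key : (E z - E ℏ) • R ℏ z = (E z - E (-ℏ)) • R ℏ z := by
      calc (E z - E ℏ) • R ℏ z = ((E z - E ℏ) • 1) * R ℏ z := by
            rw [smul_mul_assoc, one_mul]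
        _ = R ℏ z * R (-ℏ) z * R ℏ z := by rw [h1]
        _ = R ℏ z * (R (-ℏ) z * R ℏ z) := by rw [mul_assoc]
        _ = R ℏ z * ((E z - E (-ℏ)) • 1) := by rw [h2]
        _ = (E z - E (-ℏ)) • R ℏ z := by rw [mul_smul_comm, mul_one]
    have hc : (E z - E ℏ) = (E z - E (-ℏ)) := by
      have h0 : ((E z - E ℏ) - (E z - E (-ℏ))) • R ℏ z = 0 := by
        rw [sub_smul, key, sub_self]
      rcases smul_eq_zero.mp h0 with h | h
      · exact sub_eq_zero.mp h
      · exact absurd h hA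
    rw [h2, ← hc]


lemma aybe' (hAYBE : ∀ ℏ η z₁ z₂ z₃ : ℂ,
      e12 (R ℏ (z₁ - z₂)) * e23 (R η (z₂ - z₃)) =
        e13 (R η (z₁ - z₃)) * e12 (R (ℏ - η) (z₁ - z₂)) +
          e23 (R (η - ℏ) (z₂ - z₃)) * e13 (R ℏ (z₁ - z₃)))
    (hskew : ∀ ℏ z : ℂ, R ℏ z = -(Perm N * R (-ℏ) (-z) * Perm N)) :
    ∀ ℏ η u v : ℂ,
      e13 (R ℏ u) * e23 (R η v) =
        e23 (R (ℏ + η) v) * e12 (R ℏ (u - v)) -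
          e12 (R (-η) (u - v)) * e13 (R (ℏ + η) u) := by
  intro ℏ η u v
  have H := congrArg conj3 (hAYBE ℏ (-η) u 0 v)
  rw [conj3_mul, conj3_add, conj3_mul, conj3_mul, conj3_e12, conj3_e13, conj3_e12,
    conj3_e23, conj3_e23, conj3_e13] at H
  rw [hswap R hskew, hswap R hskew] at H
  rw [show (0 : ℂ) - v = -v from zero_sub v, show u - (0:ℂ) = u from sub_zero u] at H
  rw [show -(-η) = η from neg_neg η, show -(-v) = v from neg_neg v,
    show ℏ - -η = ℏ + η from sub_neg_eq_add ℏ η,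
    show -(-η - ℏ) = ℏ + η by ring] at H
  rw [e23_neg, e23_neg, mul_neg, neg_mul] at H
  have H2 := congrArg Neg.neg H
  rw [neg_neg, neg_add, neg_neg] at H2
  rw [H2]
  abel

end withR
end YBaux

open YBaux

/-- The Yang–Baxter equation with two Planck constants. -/
theorem yang_baxter_two_planck_constants (N : ℕ) (hN : 1 ≤ N)
    (R : ℂ → ℂ → Matrix (Fin N × Fin N) (Fin N × Fin N) ℂ) (E : ℂ → ℂ)
    (hAYBE : ∀ ℏ η z₁ z₂ z₃ : ℂ,
      e12 (R ℏ (z₁ - z₂)) * e23 (R η (z₂ - z₃)) =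
        e13 (R η (z₁ - z₃)) * e12 (R (ℏ - η) (z₁ - z₂)) +
          e23 (R (η - ℏ) (z₂ - z₃)) * e13 (R ℏ (z₁ - z₃)))
    (hskew : ∀ ℏ z : ℂ, R ℏ z = -(Perm N * R (-ℏ) (-z) * Perm N))
    (hunit : ∀ ℏ z : ℂ, R ℏ z * (Perm N * R ℏ (-z) * Perm N) =
      (E ℏ - E z) • (1 : Matrix (Fin N × Fin N) (Fin N × Fin N) ℂ))
    (ℏ η z₁ z₂ z₃ : ℂ) :
    e12 (R η (z₁ - z₂)) * e13 (R ℏ (z₁ - z₃)) * e23 (R η (z₂ - z₃)) +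
        e12 (R ℏ (z₁ - z₂)) * e13 (R η (z₁ - z₃)) * e23 (R ℏ (z₂ - z₃)) =
      e23 (R η (z₂ - z₃)) * e13 (R ℏ (z₁ - z₃)) * e12 (R η (z₁ - z₂)) +
        e23 (R ℏ (z₂ - z₃)) * e13 (R η (z₁ - z₃)) * e12 (R ℏ (z₁ - z₂)) := by
  set a := z₁ - z₂ with ha
  set b := z₂ - z₃ with hb
  set c := z₁ - z₃ with hc
  have hcb : c - b = a := by rw [ha, hb, hc]; ring
  -- variant AYBE instances
  have A1 := aybe' R hAYBE hskew ℏ η c b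
  rw [hcb] at A1
  have A2 := aybe' R hAYBE hskew η ℏ c b
  rw [hcb, show η + ℏ = ℏ + η from add_comm η ℏ] at A2
  -- straight AYBE instances
  have B1 := hAYBE η (ℏ + η) z₁ z₂ z₃
  rw [← ha, ← hb, ← hc, show η - (ℏ + η) = -ℏ by ring, show ℏ + η - η = ℏ by ring] at B1
  have B2 := hAYBE ℏ (ℏ + η) z₁ z₂ z₃
  rw [← ha, ← hb, ← hc, show ℏ - (ℏ + η) = -η by ring, show ℏ + η - ℏ = η by ring] at B2
  -- unitarity instances
  have UA : e12 (R η a) * e12 (R (-η) a) =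
      (E a - E η) • (1 : Matrix (Fin N × Fin N × Fin N) _ ℂ) := by
    rw [emul12, hU1 R E hskew hunit, e12_smul_one]
  have UA' : e12 (R ℏ a) * e12 (R (-ℏ) a) =
      (E a - E ℏ) • (1 : Matrix (Fin N × Fin N × Fin N) _ ℂ) := by
    rw [emul12, hU1 R E hskew hunit, e12_smul_one]
  have UB : e12 (R (-ℏ) a) * e12 (R ℏ a) =
      (E a - E ℏ) • (1 : Matrix (Fin N × Fin N × Fin N) _ ℂ) := by
    rw [emul12, hU2 R E hskew hunit, e12_smul_one]
  have UB' : e12 (R (-η) a) * e12 (R η a) =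
      (E a - E η) • (1 : Matrix (Fin N × Fin N × Fin N) _ ℂ) := by
    rw [emul12, hU2 R E hskew hunit, e12_smul_one]
  have L1 : e12 (R η a) * e13 (R ℏ c) * e23 (R η b) =
      (E η - E ℏ) • e13 (R (ℏ + η) c) + e23 (R ℏ b) * e13 (R η c) * e12 (R ℏ a) := by
    rw [mul_assoc, A1, mul_sub, ← mul_assoc, ← mul_assoc, B1, UA, add_mul,
      mul_assoc (e13 (R (ℏ + η) c)), UB, mul_smul_comm, mul_one, smul_mul_assoc, one_mul]
    module
  have L2 : e12 (R ℏ a) * e13 (R η c) * e23 (R ℏ b) =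
      (E ℏ - E η) • e13 (R (ℏ + η) c) + e23 (R η b) * e13 (R ℏ c) * e12 (R η a) := by
    rw [mul_assoc, A2, mul_sub, ← mul_assoc, ← mul_assoc, B2, UA', add_mul,
      mul_assoc (e13 (R (ℏ + η) c)), UB', mul_smul_comm, mul_one, smul_mul_assoc, one_mul]
    module
  rw [L1, L2]
  module
end

section
/- The classical Yang–Baxter equation follows from the quantum one in the classical limit: with R, S, r as described, the classical r-matrix r satisfies [r_{12}(z₁−z₂), r_{13}(z₁−z₃)] + [r_{12}(z₁−z₂), r_{23}(z₂−z₃)] + [r_{13}(z₁−z₃), r_{23}(z₂−z₃)] = 0 in Mat_N(ℂ)^{⊗3}, for all z₁, z₂, z₃ ∈ ℂ (where [·,·] is the matrix commutator). -/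
open Matrix Kronecker BigOperators

lemma key_cybe {M : Type*} [Ring M] [Module ℂ M] [SMulCommClass ℂ M M] [IsScalarTower ℂ M M]
    (a : ℂ) (ha : a ≠ 0) (A B C : M)
    (h : (a⁻¹ • 1 + A) * (a⁻¹ • 1 + B) * (a⁻¹ • 1 + C) =
         (a⁻¹ • 1 + C) * (a⁻¹ • 1 + B) * (a⁻¹ • 1 + A)) :
    ⁅A,B⁆ + ⁅A,C⁆ + ⁅B,C⁆ + a • (A*B*C - C*B*A) = 0 := by
  have e : ∀ X : M, (1 : M) + a • X = a • (a⁻¹ • (1:M) + X) := fun X => by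
    rw [smul_add, smul_smul, mul_inv_cancel₀ ha, one_smul]
  have h1 : (1 + a•A) * (1 + a•B) * (1 + a•C) = (1 + a•C) * (1 + a•B) * (1 + a•A) := by
    simp only [e, smul_mul_assoc, mul_smul_comm, smul_smul]
    rw [h]
  have h2 : (a*a) • (⁅A,B⁆ + ⁅A,C⁆ + ⁅B,C⁆ + a • (A*B*C - C*B*A)) = 0 := by
    have h1' := sub_eq_zero.mpr h1
    rw [← h1']
    simp only [Ring.lie_def, mul_add, add_mul, one_mul, mul_one, smul_mul_assoc,
      mul_smul_comm, smul_smul, smul_add, smul_sub]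
    module
  rcases smul_eq_zero.mp h2 with h | h
  · exact absurd h (by simp [ha])
  · exact h

lemma e12_expand {N : ℕ} (c : ℂ) (X : Matrix (Fin N × Fin N) (Fin N × Fin N) ℂ) :
    e12 (c • 1 + X) = c • 1 + e12 X := by
  ext ⟨i,j,k⟩ ⟨i',j',k'⟩
  simp [e12, Matrix.one_apply, Prod.ext_iff, add_mul, mul_ite, ite_and]
  split_ifs <;> simp_all

lemma e13_expand {N : ℕ} (c : ℂ) (X : Matrix (Fin N × Fin N) (Fin N × Fin N) ℂ) :
    e13 (c • 1 + X) = c • 1 + e13 X := by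
  ext ⟨i,j,k⟩ ⟨i',j',k'⟩
  simp [e13, Matrix.one_apply, Prod.ext_iff, add_mul, mul_ite, ite_and]
  split_ifs <;> simp_all

lemma e23_expand {N : ℕ} (c : ℂ) (X : Matrix (Fin N × Fin N) (Fin N × Fin N) ℂ) :
    e23 (c • 1 + X) = c • 1 + e23 X := by
  ext ⟨i,j,k⟩ ⟨i',j',k'⟩
  simp [e23, Matrix.one_apply, Prod.ext_iff, add_mul, mul_ite, ite_and]
  split_ifs <;> simp_all

/-- The classical (non-dynamical) Yang–Baxter equation follows from the quantum one in the
classical limit `R^ℏ(z) = ℏ⁻¹·1 + r(z) + O(ℏ)`. -/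
theorem classical_yang_baxter (N : ℕ) (hN : 1 ≤ N)
    (R S : ℂ → ℂ → Matrix (Fin N × Fin N) (Fin N × Fin N) ℂ)
    (hQYBE : ∀ ℏ : ℂ, ℏ ≠ 0 → ∀ z₁ z₂ z₃ : ℂ,
      e12 (R ℏ (z₁ - z₂)) * e13 (R ℏ (z₁ - z₃)) * e23 (R ℏ (z₂ - z₃)) =
        e23 (R ℏ (z₂ - z₃)) * e13 (R ℏ (z₁ - z₃)) * e12 (R ℏ (z₁ - z₂)))
    (hexp : ∀ ℏ : ℂ, ℏ ≠ 0 → ∀ z : ℂ,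
      R ℏ z = ℏ⁻¹ • (1 : Matrix (Fin N × Fin N) (Fin N × Fin N) ℂ) + S ℏ z)
    (hcont : ∀ (z : ℂ) (i j : Fin N × Fin N), ContinuousAt (fun ℏ : ℂ => S ℏ z i j) 0)
    (z₁ z₂ z₃ : ℂ) :
    ⁅e12 (S 0 (z₁ - z₂)), e13 (S 0 (z₁ - z₃))⁆ +
        ⁅e12 (S 0 (z₁ - z₂)), e23 (S 0 (z₂ - z₃))⁆ +
        ⁅e13 (S 0 (z₁ - z₃)), e23 (S 0 (z₂ - z₃))⁆ = 0 := by
  set x := z₁ - z₂; set y := z₁ - z₃; set z := z₂ - z₃ with hz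
  set g : ℂ → Matrix (Fin N × Fin N × Fin N) (Fin N × Fin N × Fin N) ℂ := fun a =>
    ⁅e12 (S a x), e13 (S a y)⁆ + ⁅e12 (S a x), e23 (S a z)⁆ + ⁅e13 (S a y), e23 (S a z)⁆ +
      a • (e12 (S a x) * e13 (S a y) * e23 (S a z) -
           e23 (S a z) * e13 (S a y) * e12 (S a x)) with hg
  have hzero : ∀ a : ℂ, a ≠ 0 → g a = 0 := by
    intro a ha
    have h := hQYBE a ha z₁ z₂ z₃
    rw [hexp a ha, hexp a ha, hexp a ha, e12_expand, e13_expand, e23_expand] at h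
    exact key_cybe a ha _ _ _ h
  have c12 : ContinuousAt (fun a : ℂ => e12 (S a x)) 0 := by
    apply continuousAt_pi.2; intro p; apply continuousAt_pi.2; intro q
    exact (hcont x _ _).mul continuousAt_const
  have c13 : ContinuousAt (fun a : ℂ => e13 (S a y)) 0 := by
    apply continuousAt_pi.2; intro p; apply continuousAt_pi.2; intro q
    exact (hcont y _ _).mul continuousAt_const
  have c23 : ContinuousAt (fun a : ℂ => e23 (S a z)) 0 := by
    apply continuousAt_pi.2; intro p; apply continuousAt_pi.2; intro q
    exact (hcont z _ _).mul continuousAt_const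
  have hgc : ContinuousAt g 0 := by
    simp only [hg, Ring.lie_def]
    exact ((((c12.mul c13).sub (c13.mul c12)).add
        ((c12.mul c23).sub (c23.mul c12))).add
        ((c13.mul c23).sub (c23.mul c13))).add
        (continuousAt_id.smul (((c12.mul c13).mul c23).sub ((c23.mul c13).mul c12)))
  have hg0 : g 0 = 0 := by
    have h1 : Filter.Tendsto g (nhdsWithin (0:ℂ) {(0:ℂ)}ᶜ) (nhds (g 0)) :=
      hgc.tendsto.mono_left nhdsWithin_le_nhds
    have h2 : Filter.Tendsto g (nhdsWithin (0:ℂ) {(0:ℂ)}ᶜ) (nhds 0) := by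
      apply Filter.Tendsto.congr' ?_ tendsto_const_nhds
      filter_upwards [self_mem_nhdsWithin] with a ha using (hzero a ha).symm
    exact tendsto_nhds_unique h1 h2
  have := hg0
  rw [hg] at this
  simpa using this
end

section
/- The trigonometric Kronecker function φ(ℏ, z) := coth(ℏ) + coth(z) (with coth(x) = cosh(x)/sinh(x)) satisfies: (a) the Fay identity φ(ℏ, z₁−z₂)φ(η, z₂−z₃) = φ(η, z₁−z₃)φ(ℏ−η, z₁−z₂) + φ(η−ℏ, z₂−z₃)φ(ℏ, z₁−z₃) for all ℏ, η, z₁, z₂, z₃ ∈ ℂ such that sinh is nonzero at ℏ, η, ℏ−η, z₁−z₂, z₂−z₃ and z₁−z₃; and (b) the unitarity relation φ(ℏ, z)φ(ℏ, −z) = 1/sinh²(ℏ) − 1/sinh²(z) for all ℏ, z ∈ ℂ with sinh(ℏ) ≠ 0 and sinh(z) ≠ 0. -/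
open Complex

/-- The trigonometric (hyperbolic) Kronecker function `φ(ℏ,z) = coth(ℏ) + coth(z)`. -/
noncomputable def trigKron (ℏ z : ℂ) : ℂ :=
  Complex.cosh ℏ / Complex.sinh ℏ + Complex.cosh z / Complex.sinh z

/-!
Writing `φ(ℏ, z) = coth ℏ + coth z`, both identities reduce to two facts about `coth`:
the addition formula `coth (x + y) (coth x + coth y) = coth x coth y + 1`, applied once to
`ℏ = (ℏ - η) + η` and once to `z₁ - z₃ = (z₁ - z₂) + (z₂ - z₃)`, gives the Fay identity after
expanding both sides; and `coth² - 1 = 1 / sinh²` together with the oddness of `coth` gives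
unitarity.
-/

namespace Complex

noncomputable def coth (z : ℂ) : ℂ := cosh z / sinh z

theorem coth_neg (z : ℂ) : coth (-z) = -coth z := by
  simp only [coth, cosh_neg, sinh_neg, div_neg]

theorem coth_sq_sub_one {z : ℂ} (hz : sinh z ≠ 0) : coth z ^ 2 - 1 = 1 / sinh z ^ 2 := by
  rw [coth, div_pow, div_sub_one (pow_ne_zero 2 hz), cosh_sq_sub_sinh_sq]

theorem coth_add_mul_coth_add_coth {x y : ℂ} (hx : sinh x ≠ 0) (hy : sinh y ≠ 0)
    (hxy : sinh (x + y) ≠ 0) : coth (x + y) * (coth x + coth y) = coth x * coth y + 1 := by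
  simp only [coth]
  field_simp
  rw [sinh_add, cosh_add]
  ring

end Complex

theorem trigKron_eq_coth_add_coth (ℏ z : ℂ) : trigKron ℏ z = coth ℏ + coth z := rfl

theorem trigKron_fay {ℏ η u v : ℂ} (hℏ : sinh ℏ ≠ 0) (hη : sinh η ≠ 0) (hℏη : sinh (ℏ - η) ≠ 0)
    (hu : sinh u ≠ 0) (hv : sinh v ≠ 0) (huv : sinh (u + v) ≠ 0) :
    trigKron ℏ u * trigKron η v =
      trigKron η (u + v) * trigKron (ℏ - η) u + trigKron (η - ℏ) v * trigKron ℏ (u + v) := by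
  have hℏ' : sinh (ℏ - η + η) ≠ 0 := by rwa [sub_add_cancel]
  have add_ℏ := coth_add_mul_coth_add_coth hℏη hη hℏ'
  have add_uv := coth_add_mul_coth_add_coth hu hv huv
  rw [sub_add_cancel] at add_ℏ
  simp only [trigKron_eq_coth_add_coth, ← neg_sub ℏ η, coth_neg]
  linear_combination add_ℏ - add_uv

theorem trigKron_mul_trigKron_neg {ℏ z : ℂ} (hℏ : sinh ℏ ≠ 0) (hz : sinh z ≠ 0) :
    trigKron ℏ z * trigKron ℏ (-z) = 1 / sinh ℏ ^ 2 - 1 / sinh z ^ 2 := by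
  rw [trigKron_eq_coth_add_coth, trigKron_eq_coth_add_coth, coth_neg, ← coth_sq_sub_one hℏ,
    ← coth_sq_sub_one hz]
  ring

/-- The trigonometric Kronecker function satisfies the Fay identity and the unitarity
relation with `E(x) = 1/sinh²(x)`. -/
theorem trigonometric_kronecker_fay_and_unitarity :
    (∀ ℏ η z₁ z₂ z₃ : ℂ, Complex.sinh ℏ ≠ 0 → Complex.sinh η ≠ 0 →
      Complex.sinh (ℏ - η) ≠ 0 → Complex.sinh (z₁ - z₂) ≠ 0 →
      Complex.sinh (z₂ - z₃) ≠ 0 → Complex.sinh (z₁ - z₃) ≠ 0 →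
      trigKron ℏ (z₁ - z₂) * trigKron η (z₂ - z₃) =
        trigKron η (z₁ - z₃) * trigKron (ℏ - η) (z₁ - z₂) +
          trigKron (η - ℏ) (z₂ - z₃) * trigKron ℏ (z₁ - z₃)) ∧
    (∀ ℏ z : ℂ, Complex.sinh ℏ ≠ 0 → Complex.sinh z ≠ 0 →
      trigKron ℏ z * trigKron ℏ (-z) =
        1 / Complex.sinh ℏ ^ 2 - 1 / Complex.sinh z ^ 2) := by
  refine ⟨fun ℏ η z₁ z₂ z₃ hℏ hη hℏη h₁₂ h₂₃ h₁₃ => ?_, fun ℏ z => trigKron_mul_trigKron_neg⟩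
  rw [← sub_add_sub_cancel z₁ z₂ z₃] at h₁₃ ⊢
  exact trigKron_fay hℏ hη hℏη h₁₂ h₂₃ h₁₃
end

section
/- The elliptic Kronecker function satisfies the genus-one Fay trisecant identity: for every τ ∈ ℂ with Im(τ) > 0, and for all ℏ, η, z₁, z₂, z₃ ∈ ℂ such that ϑ is nonzero at each of ℏ, η, ℏ−η, η−ℏ, z₁−z₂, z₂−z₃, z₁−z₃, one has φ(ℏ, z₁−z₂)φ(η, z₂−z₃) = φ(η, z₁−z₃)φ(ℏ−η, z₁−z₂) + φ(η−ℏ, z₂−z₃)φ(ℏ, z₁−z₃), where φ(u, v) := ϑ'(0)·ϑ(u+v) / (ϑ(u)·ϑ(v)). -/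
/-!
The theta function satisfies Weierstrass's three-term identity
`Θ(x,y) Θ(u,v) = Θ(x,u) Θ(y,v) - Θ(x,v) Θ(y,u)` for `Θ(x,y) = ϑ(x+y) ϑ(x-y)`.
Substituting `m = k + l + 1`, `n = k - l` in the double series of `Θ(x,y)` turns it into a sum over
the lattice points with `m + n` odd of `(-1)^m q^((m²+n²)/2) e(mx + ny)`. In the product of two
such sums the Gaussian factor of a term `(m,n,p,r)` does not change when the pairs are regrouped
as `(m,p),(n,r)` or `(m,r),(n,p)`, so the identity holds termwise, by a sign identity that only
depends on the parities of `m, n, p, r`. Fay's identity for `ϑ` is Weierstrass's at half-sums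
of the arguments (using that `ϑ` is odd), and dividing it by the theta values in the denominators
gives the identity for `φ`.
-/

open Complex

/-- The odd Jacobi theta function
`ϑ(x) = Σ_{k ∈ ℤ} exp(πiτ(k+1/2)² + 2πi(x+1/2)(k+1/2))`. -/
noncomputable def jacobiTheta1 (τ x : ℂ) : ℂ :=
  ∑' k : ℤ, Complex.exp (Real.pi * Complex.I * τ * ((k : ℂ) + 1 / 2) ^ 2 +
    2 * Real.pi * Complex.I * (x + 1 / 2) * ((k : ℂ) + 1 / 2))

/-- The elliptic Kronecker function `φ(u,v) = ϑ'(0)·ϑ(u+v)/(ϑ(u)·ϑ(v))`. -/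
noncomputable def ellKron (τ u v : ℂ) : ℂ :=
  deriv (jacobiTheta1 τ) 0 * jacobiTheta1 τ (u + v) / (jacobiTheta1 τ u * jacobiTheta1 τ v)

open Real

theorem HasSum.mul_of_finiteDimensional {R ι κ : Type*} [NormedRing R] [NormedSpace ℝ R]
    [FiniteDimensional ℝ R] {f : ι → R} {g : κ → R} {s t : R} (hf : HasSum f s)
    (hg : HasSum g t) : HasSum (fun z : ι × κ => f z.1 * g z.2) (s * t) :=
  haveI := FiniteDimensional.complete ℝ R
  hf.mul hg <| summable_mul_of_summable_norm (summable_norm_iff.mpr hf.summable)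
    (summable_norm_iff.mpr hg.summable)

noncomputable def jacobiTheta1Term (τ x : ℂ) (k : ℤ) : ℂ :=
  cexp (π * I * τ * ((k : ℂ) + 1 / 2) ^ 2 + 2 * π * I * (x + 1 / 2) * ((k : ℂ) + 1 / 2))

lemma jacobiTheta1Term_eq_mul_jacobiTheta₂_term (τ x : ℂ) (k : ℤ) :
    jacobiTheta1Term τ x k = cexp (π * I * τ / 4 + π * I * (x + 1 / 2)) *
      jacobiTheta₂_term k (x + (1 + τ) / 2) τ := by
  rw [jacobiTheta1Term, jacobiTheta₂_term, ← Complex.exp_add]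
  ring_nf

lemma hasSum_jacobiTheta1Term {τ : ℂ} (hτ : 0 < τ.im) (x : ℂ) :
    HasSum (jacobiTheta1Term τ x) (jacobiTheta1 τ x) := by
  refine Summable.hasSum ?_
  rw [funext (jacobiTheta1Term_eq_mul_jacobiTheta₂_term τ x)]
  exact ((summable_jacobiTheta₂_term_iff _ τ).mpr hτ).mul_left _

lemma jacobiTheta1_eq_mul_jacobiTheta₂ (τ x : ℂ) :
    jacobiTheta1 τ x =
      cexp (π * I * τ / 4 + π * I * (x + 1 / 2)) * jacobiTheta₂ (x + (1 + τ) / 2) τ := by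
  simp_rw [jacobiTheta₂, ← tsum_mul_left, ← jacobiTheta1Term_eq_mul_jacobiTheta₂_term]
  rfl

lemma jacobiTheta1_neg (τ x : ℂ) : jacobiTheta1 τ (-x) = -jacobiTheta1 τ x := by
  have hshift : -x + (1 + τ) / 2 = -(x + (1 + τ) / 2) + 1 + τ := by ring
  have hexp : π * I * τ / 4 + π * I * (-x + 1 / 2) +
      -π * I * (τ + 2 * (-(x + (1 + τ) / 2) + 1)) =
      π * I * τ / 4 + π * I * (x + 1 / 2) - π * I := by ring
  rw [jacobiTheta1_eq_mul_jacobiTheta₂, jacobiTheta1_eq_mul_jacobiTheta₂, hshift,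
    jacobiTheta₂_add_left', jacobiTheta₂_add_left, jacobiTheta₂_neg_left, ← mul_assoc,
    ← Complex.exp_add, hexp, Complex.exp_sub, exp_pi_mul_I]
  ring

noncomputable def oddSign (m n : ℤ) : ℂ := if Odd (m + n) then (-1) ^ m else 0

lemma oddSign_mul_oddSign (m n p r : ℤ) :
    oddSign m n * oddSign p r = oddSign m p * oddSign n r - oddSign m r * oddSign n p := by
  rcases Int.emod_two_eq_zero_or_one m with hm | hm <;>
    rcases Int.emod_two_eq_zero_or_one n with hn | hn <;>
    rcases Int.emod_two_eq_zero_or_one p with hp | hp <;>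
    rcases Int.emod_two_eq_zero_or_one r with hr | hr <;>
    simp [oddSign, Int.odd_iff, Int.even_iff, Int.add_emod, neg_one_zpow_eq_ite, hm, hn, hp, hr]

noncomputable def gaussTerm (τ x y : ℂ) (m n : ℤ) : ℂ :=
  cexp (π * I * τ * ((m : ℂ) ^ 2 + (n : ℂ) ^ 2) / 2 + 2 * π * I * (m * x + n * y))

noncomputable def thetaProductTerm (τ x y : ℂ) (p : ℤ × ℤ) : ℂ :=
  oddSign p.1 p.2 * gaussTerm τ x y p.1 p.2

lemma thetaProductTerm_mul (τ x y u v : ℂ) (m n p r : ℤ) :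
    thetaProductTerm τ x y (m, n) * thetaProductTerm τ u v (p, r) =
      thetaProductTerm τ x u (m, p) * thetaProductTerm τ y v (n, r) -
        thetaProductTerm τ x v (m, r) * thetaProductTerm τ y u (n, p) := by
  have hu : gaussTerm τ x u m p * gaussTerm τ y v n r =
      gaussTerm τ x y m n * gaussTerm τ u v p r := by
    simp only [gaussTerm, ← Complex.exp_add]
    ring_nf
  have hv : gaussTerm τ x v m r * gaussTerm τ y u n p =
      gaussTerm τ x y m n * gaussTerm τ u v p r := by
    simp only [gaussTerm, ← Complex.exp_add]
    ring_nf
  simp only [thetaProductTerm]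
  linear_combination oddSign m r * oddSign n p * hv - oddSign m p * oddSign n r * hu +
    gaussTerm τ x y m n * gaussTerm τ u v p r * oddSign_mul_oddSign m n p r

def oddSumParam (p : ℤ × ℤ) : ℤ × ℤ := (p.1 + p.2 + 1, p.1 - p.2)

lemma oddSumParam_injective : Function.Injective oddSumParam := by
  rintro ⟨k, l⟩ ⟨k', l'⟩ h
  simp only [oddSumParam, Prod.mk.injEq] at h
  ext <;> omega

lemma mem_range_oddSumParam {p : ℤ × ℤ} (hp : Odd (p.1 + p.2)) :
    p ∈ Set.range oddSumParam := by
  obtain ⟨j, hj⟩ := hp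
  exact ⟨(j, j - p.2), by ext <;> simp only [oddSumParam] <;> omega⟩

lemma jacobiTheta1Term_mul_jacobiTheta1Term (τ x y : ℂ) (k l : ℤ) :
    jacobiTheta1Term τ (x + y) k * jacobiTheta1Term τ (x - y) l =
      thetaProductTerm τ x y (oddSumParam (k, l)) := by
  have hodd : Odd (k + l + 1 + (k - l)) := ⟨k, by ring⟩
  have hsign : (-1 : ℂ) ^ (k + l + 1) = cexp (((k + l + 1 : ℤ) : ℂ) * (π * I)) := by
    rw [exp_int_mul, exp_pi_mul_I]
  rw [thetaProductTerm, oddSumParam, oddSign, if_pos hodd, hsign, gaussTerm, jacobiTheta1Term,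
    jacobiTheta1Term, ← Complex.exp_add, ← Complex.exp_add]
  congr 1
  push_cast
  ring

lemma hasSum_thetaProductTerm {τ : ℂ} (hτ : 0 < τ.im) (x y : ℂ) :
    HasSum (thetaProductTerm τ x y) (jacobiTheta1 τ (x + y) * jacobiTheta1 τ (x - y)) := by
  have hvanish : ∀ p ∉ Set.range oddSumParam, thetaProductTerm τ x y p = 0 := fun p hp => by
    simp [thetaProductTerm, oddSign, mt mem_range_oddSumParam hp]
  rw [← oddSumParam_injective.hasSum_iff hvanish]
  exact ((hasSum_jacobiTheta1Term hτ (x + y)).mul_of_finiteDimensional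
    (hasSum_jacobiTheta1Term hτ (x - y))).congr_fun fun ⟨k, l⟩ =>
      (jacobiTheta1Term_mul_jacobiTheta1Term τ x y k l).symm

theorem jacobiTheta1_weierstrass {τ : ℂ} (hτ : 0 < τ.im) (x y u v : ℂ) :
    jacobiTheta1 τ (x + y) * jacobiTheta1 τ (x - y) *
      (jacobiTheta1 τ (u + v) * jacobiTheta1 τ (u - v)) =
    jacobiTheta1 τ (x + u) * jacobiTheta1 τ (x - u) *
      (jacobiTheta1 τ (y + v) * jacobiTheta1 τ (y - v)) -
    jacobiTheta1 τ (x + v) * jacobiTheta1 τ (x - v) *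
      (jacobiTheta1 τ (y + u) * jacobiTheta1 τ (y - u)) := by
  have hsum (a b c d : ℂ) := (hasSum_thetaProductTerm hτ a b).mul_of_finiteDimensional
    (hasSum_thetaProductTerm hτ c d)
  have hu := (Equiv.prodProdProdComm ℤ ℤ ℤ ℤ).hasSum_iff.mpr (hsum x u y v)
  have hv := ((Equiv.prodCongr (Equiv.refl _) (Equiv.prodComm ℤ ℤ)).trans
    (Equiv.prodProdProdComm ℤ ℤ ℤ ℤ)).hasSum_iff.mpr (hsum x v y u)
  exact (hsum x y u v).unique <| (hu.sub hv).congr_fun fun ⟨⟨m, n⟩, p, r⟩ =>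
    thetaProductTerm_mul τ x y u v m n p r

theorem jacobiTheta1_fay {τ : ℂ} (hτ : 0 < τ.im) (a b x y : ℂ) :
    jacobiTheta1 τ (a + x) * jacobiTheta1 τ (b + y) *
      (jacobiTheta1 τ (x + y) * jacobiTheta1 τ (a - b)) =
    jacobiTheta1 τ (a + x + y) * jacobiTheta1 τ b *
      (jacobiTheta1 τ x * jacobiTheta1 τ (a - b - y)) +
    jacobiTheta1 τ (b + x + y) * jacobiTheta1 τ a *
      (jacobiTheta1 τ (a - b + x) * jacobiTheta1 τ y) := by
  have h := jacobiTheta1_weierstrass hτ ((a + b + x + y) / 2) ((a - b + x - y) / 2)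
    ((x + y + a - b) / 2) ((x + y - a + b) / 2)
  have hy : jacobiTheta1 τ ((a - b + x - y) / 2 - (x + y + a - b) / 2) = -jacobiTheta1 τ y := by
    rw [← jacobiTheta1_neg]
    ring_nf
  rw [hy] at h
  ring_nf at h ⊢
  linear_combination h

theorem elliptic_kronecker_fay_general (τ : ℂ) (hτ : 0 < τ.im) (ℏ η z₁ z₂ z₃ : ℂ)
    (h1 : jacobiTheta1 τ ℏ ≠ 0) (h2 : jacobiTheta1 τ η ≠ 0)
    (h3 : jacobiTheta1 τ (ℏ - η) ≠ 0)
    (h5 : jacobiTheta1 τ (z₁ - z₂) ≠ 0) (h6 : jacobiTheta1 τ (z₂ - z₃) ≠ 0)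
    (h7 : jacobiTheta1 τ (z₁ - z₃) ≠ 0) :
    ellKron τ ℏ (z₁ - z₂) * ellKron τ η (z₂ - z₃) =
      ellKron τ η (z₁ - z₃) * ellKron τ (ℏ - η) (z₁ - z₂) +
        ellKron τ (η - ℏ) (z₂ - z₃) * ellKron τ ℏ (z₁ - z₃) := by
  have hfay := jacobiTheta1_fay hτ ℏ η (z₁ - z₂) (z₂ - z₃)
  rw [add_assoc, add_assoc, sub_add_sub_cancel] at hfay
  have hodd : jacobiTheta1 τ (η - ℏ) = -jacobiTheta1 τ (ℏ - η) := by
    rw [← jacobiTheta1_neg, neg_sub]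
  have hodd' :
      jacobiTheta1 τ (η - ℏ + (z₂ - z₃)) = -jacobiTheta1 τ (ℏ - η - (z₂ - z₃)) := by
    rw [← jacobiTheta1_neg]
    ring_nf
  simp only [ellKron, hodd, hodd']
  field_simp
  linear_combination deriv (jacobiTheta1 τ) 0 ^ 2 * hfay

/-- The elliptic Kronecker function satisfies the genus-one Fay trisecant identity. -/
theorem elliptic_kronecker_fay (τ : ℂ) (hτ : 0 < τ.im) (ℏ η z₁ z₂ z₃ : ℂ)
    (h1 : jacobiTheta1 τ ℏ ≠ 0) (h2 : jacobiTheta1 τ η ≠ 0)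
    (h3 : jacobiTheta1 τ (ℏ - η) ≠ 0) (h4 : jacobiTheta1 τ (η - ℏ) ≠ 0)
    (h5 : jacobiTheta1 τ (z₁ - z₂) ≠ 0) (h6 : jacobiTheta1 τ (z₂ - z₃) ≠ 0)
    (h7 : jacobiTheta1 τ (z₁ - z₃) ≠ 0) :
    ellKron τ ℏ (z₁ - z₂) * ellKron τ η (z₂ - z₃) =
      ellKron τ η (z₁ - z₃) * ellKron τ (ℏ - η) (z₁ - z₂) +
        ellKron τ (η - ℏ) (z₂ - z₃) * ellKron τ ℏ (z₁ - z₃) :=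
  elliptic_kronecker_fay_general τ hτ ℏ η z₁ z₂ z₃ h1 h2 h3 h5 h6 h7
end
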